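/- Let X be a general divisor in |3M + nL| on the rational scroll V = Proj(O_{P^1}(d_1) ⊕ O_{P^1}(d_2) ⊕ O_{P^1}(d_3) ⊕ O_{P^1}) with d_1 ≥ d_2 ≥ d_3 ≥ 0. If X is smooth and rk Pic(X) = 2, then either d_1 = −n or d_2 ≥ −n. -/
import Mathlib


/-!
Formalization over ℂ of statements about threefolds in rational scrolls
(after "Birationally rigid del Pezzo fibrations" / the paper on divisors in |3M+nL|).

The (weighted) rational scroll `V = Proj(⊕ᵢ O_{ℙ¹}(dᵢ))` is modelled concretely through
its Cox ring: bihomogeneous polynomials in base coordinates `t₁, t₂` and fibre coordinates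
`x₁, …, x_r`, with points of `V` realized as torus orbits on the affine cone.  `M` denotes
the tautological line bundle, `L` the fibre of `V → ℙ¹`; a divisor `X ∈ |aM + bL|` is the
zero locus of a bihomogeneous polynomial of type `(a, b)`.
-/

open MvPolynomial CategoryTheory

set_option synthInstance.maxHeartbeats 1000000
set_option maxHeartbeats 1000000

noncomputable section
namespace ScrollAG

/-- Variables on the scroll cone: 2 base coordinates `t₁,t₂` and `r` fibre coordinates. -/
abbrev BVar (r : ℕ) := Sum (Fin 2) (Fin r)

/-- Bihomogeneous coordinate polynomials on the (weighted) rational scroll with `r` fibre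
coordinates. -/
abbrev BPoly (r : ℕ) := MvPolynomial (BVar r) ℂ

/-- Evaluation of a coordinate polynomial at a point of the affine cone. -/
def evalPt {r : ℕ} (P : BPoly r) (p : (Fin 2 → ℂ) × (Fin r → ℂ)) : ℂ :=
  eval (Sum.elim p.1 p.2) P

/-- The substitution corresponding to the 2-torus rescaling
`tᵢ ↦ l·tᵢ`, `xᵢ ↦ m^(wᵢ) · l^(-dᵢ) · xᵢ`, where `wᵢ` is the weight of `xᵢ`
(`wᵢ = 1` for an ordinary scroll) and `dᵢ` is the twist (`xᵢ = 0` lies in `|wᵢM - dᵢL|`). -/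
def twist {r : ℕ} (w : Fin r → ℕ) (d : Fin r → ℤ) (l m : ℂˣ) : BPoly r →ₐ[ℂ] BPoly r :=
  aeval (Sum.elim (fun i => C (l : ℂ) * X (Sum.inl i))
    (fun i => C ((m : ℂ) ^ (w i) * (l : ℂ) ^ (-(d i))) * X (Sum.inr i)))

/-- `P` is bihomogeneous of type `(a, b)`, i.e. `P ∈ |aM + bL|` as a divisor equation:
it is an eigenvector of every torus rescaling with eigenvalue `l^b · m^a`. -/
def IsBihom {r : ℕ} (w : Fin r → ℕ) (d : Fin r → ℤ) (a b : ℤ) (P : BPoly r) : Prop :=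
  ∀ l m : ℂˣ, twist w d l m P = C ((l : ℂ) ^ b * (m : ℂ) ^ a) * P

/-- The linear system `|aM + bL|` on the scroll, as a `ℂ`-subspace of the coordinate ring. -/
def bihomSubmodule {r : ℕ} (w : Fin r → ℕ) (d : Fin r → ℤ) (a b : ℤ) :
    Submodule ℂ (BPoly r) where
  carrier := {P | IsBihom w d a b P}
  add_mem' := fun {P Q} hP hQ l m => by rw [map_add, hP l m, hQ l m, mul_add]
  zero_mem' := fun l m => by rw [map_zero, mul_zero]
  smul_mem' := fun c P hP l m => by rw [map_smul, hP l m, mul_smul_comm]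

/-- The affine cone over the scroll (irrelevant loci removed). -/
def ConeSet (r : ℕ) : Set ((Fin 2 → ℂ) × (Fin r → ℂ)) := {p | p.1 ≠ 0 ∧ p.2 ≠ 0}

/-- The torus rescaling action on points of the cone. -/
def scalePt {r : ℕ} (w : Fin r → ℕ) (d : Fin r → ℤ) (l m : ℂˣ)
    (p : (Fin 2 → ℂ) × (Fin r → ℂ)) : (Fin 2 → ℂ) × (Fin r → ℂ) :=
  (fun i => (l : ℂ) * p.1 i, fun i => (m : ℂ) ^ (w i) * (l : ℂ) ^ (-(d i)) * p.2 i)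

/-- Points of the (weighted) rational scroll `Proj(⊕ O(dᵢ))`: orbits of the 2-torus acting
on the cone.  As a quotient of a subspace of `ℂ^(2+r)` it carries the (euclidean) quotient
topology, which is the classical topology of the scroll. -/
def ScrollPt {r : ℕ} (w : Fin r → ℕ) (d : Fin r → ℤ) : Type :=
  Quot (fun p q : ConeSet r => ∃ l m : ℂˣ, q.val = scalePt w d l m p.val)

instance {r : ℕ} (w : Fin r → ℕ) (d : Fin r → ℤ) : TopologicalSpace (ScrollPt w d) := by
  unfold ScrollPt; infer_instance

/-- The zero locus in the scroll of a (bihomogeneous) coordinate polynomial. -/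
def hypLocus {r : ℕ} (w : Fin r → ℕ) (d : Fin r → ℤ) (P : BPoly r) : Set (ScrollPt w d) :=
  {z | ∃ p : ConeSet r, Quot.mk _ p = z ∧ evalPt P p.val = 0}

/-- Smoothness (quasi-smoothness) of the hypersurface `{P = 0}`: the affine cone over it is
smooth away from the irrelevant loci, by the Jacobian criterion.  For the members of the
linear systems considered here this is equivalent to smoothness of the hypersurface. -/
def IsSmoothHyp {r : ℕ} (P : BPoly r) : Prop :=
  ∀ p ∈ ConeSet r, evalPt P p = 0 → ∃ v : BVar r, eval (Sum.elim p.1 p.2) (pderiv v P) ≠ 0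

/-- Dehomogenization to the standard affine chart `{t₂ = 1, x_{j₀} = 1}` of the scroll
(the fibre coordinate `x_{j₀}` must have weight 1).  The chart coordinates are
`X 0 = t₁` and `X (i+1) = xᵢ` for `i < j₀`, `X i = xᵢ` for `i > j₀`. -/
def dehomAt (r : ℕ) (j₀ : Fin r) : BPoly r →ₐ[ℂ] MvPolynomial (Fin r) ℂ :=
  aeval (Sum.elim
    (fun i : Fin 2 => if i = 0 then X ⟨0, j₀.pos⟩ else 1)
    (fun i : Fin r => if h : i.val < j₀.val then X ⟨i.val + 1, by omega⟩
      else if i = j₀ then 1 else X i))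

/-- The coordinate ring of (the trace on the standard chart `{t₂ = 1, x_{j₀} = 1}` of) the
closed subvariety of the scroll cut out by the equations in `S`. -/
abbrev chartRing {r : ℕ} (j₀ : Fin r) (S : Set (BPoly r)) : Type :=
  MvPolynomial (Fin r) ℂ ⧸ Ideal.span (dehomAt r j₀ '' S)

/-- Rationality of the threefold cut out in the scroll by the equations in `S`:
its function field — the fraction field of the coordinate ring of a standard dense affine
chart — is isomorphic, as a `ℂ`-algebra, to the rational function field `ℂ(u₁,u₂,u₃)`,
i.e. the threefold is birational to `ℙ³`. -/
def IsRationalChart {r : ℕ} (j₀ : Fin r) (S : Set (BPoly r)) : Prop :=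
  ∃ e : FractionRing (chartRing j₀ S) ≃+* FractionRing (MvPolynomial (Fin 3) ℂ),
    ∀ c : ℂ,
      e (algebraMap (chartRing j₀ S) _ (algebraMap ℂ _ c)) =
        algebraMap (MvPolynomial (Fin 3) ℂ) _ (MvPolynomial.C c)

/-- The rank of a commutative group, i.e. the dimension of `G ⊗ ℚ`. -/
def commGroupRank (G : Type*) [CommGroup G] : Cardinal :=
  Module.rank ℚ (TensorProduct ℤ ℚ (Additive G))

/-- Triviality (up to torsion) of the divisor class group of the standard affine chart of
the subvariety of the scroll cut out by `S`.  For the smooth threefolds `X` considered here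
(divisors in `|3M+nL|`), the restriction `Cl X → Cl(chart)` is surjective with kernel
generated by the two independent boundary classes `M|_X, L|_X`; hence `rk Pic X = 2` is
equivalent to this condition. -/
def ChartClassGroupTrivial {r : ℕ} (j₀ : Fin r) (S : Set (BPoly r)) : Prop :=
  ∀ (_h : IsDomain (chartRing j₀ S)),
    commGroupRank (ClassGroup (chartRing j₀ S)) = 0

/-- `f : W → ℂ` is a polynomial function on the `ℂ`-vector space `W`. -/
def IsPolyFun {W : Type*} [AddCommGroup W] [Module ℂ W] (f : W → ℂ) : Prop :=
  f ∈ Algebra.adjoin ℂ {g : W → ℂ | IsLinearMap ℂ g}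

/-- `Φ` holds for a general member of the linear system `W`: it holds away from a proper
Zariski closed subset (the zero set of a nonzero polynomial function on `W`). -/
def GenerallyHolds {V : Type*} [AddCommGroup V] [Module ℂ V] (W : Submodule ℂ V)
    (Φ : V → Prop) : Prop :=
  ∃ f : W → ℂ, IsPolyFun f ∧ f ≠ 0 ∧ ∀ P : W, f P ≠ 0 → Φ P

/-- `Φ` holds for a very general member of the linear system `W`: it holds away from a
countable union of proper Zariski closed subsets. -/
def VeryGenerallyHolds {V : Type*} [AddCommGroup V] [Module ℂ V] (W : Submodule ℂ V)
    (Φ : V → Prop) : Prop :=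
  ∃ f : ℕ → W → ℂ, (∀ k, IsPolyFun (f k) ∧ f k ≠ 0) ∧
    ∀ P : W, (∀ k, f k P ≠ 0) → Φ P




/-! ### Auxiliary lemmas for Statement 7 -/

private lemma poly_zero_of_nonzero_roots (h : Polynomial ℂ)
    (hv : ∀ l : ℂ, l ≠ 0 → h.eval l = 0) : h = 0 :=
  h.eq_zero_of_infinite_isRoot (((Set.finite_singleton (0:ℂ)).infinite_compl).mono
    (fun x hx => hv x (by simpa using hx)))

private lemma c_eq_zero_of_neg (h : Polynomial ℂ) (k : ℕ) (hk : 1 ≤ k) (c : ℂ)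
    (hv : ∀ l : ℂ, l ≠ 0 → l ^ k * h.eval l = c) : c = 0 := by
  have h0 : Polynomial.X ^ k * h - Polynomial.C c = 0 := by
    apply poly_zero_of_nonzero_roots
    intro l hl
    simp [hv l hl]
  have h2 := congrArg (Polynomial.eval 0) h0
  simpa [zero_pow (by omega : k ≠ 0)] using h2

private lemma eval_zero_of_pos (h : Polynomial ℂ) (k : ℕ) (hk : 1 ≤ k) (c : ℂ)
    (hv : ∀ l : ℂ, l ≠ 0 → h.eval l = c * l ^ k) : h.eval 0 = 0 := by
  have h0 : h - Polynomial.C c * Polynomial.X ^ k = 0 := by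
    apply poly_zero_of_nonzero_roots
    intro l hl
    simp [hv l hl]
  have h2 := congrArg (Polynomial.eval 0) h0
  simpa [zero_pow (by omega : k ≠ 0)] using h2

private lemma aeval_eq_eval'' {σ : Type*} (f : σ → ℂ) (p : MvPolynomial σ ℂ) :
    aeval f p = eval f p := by
  rw [aeval_def, Algebra.algebraMap_self]; rfl

private lemma eval_aeval' {σ : Type*} (τ : σ → ℂ) (g : σ → MvPolynomial σ ℂ)
    (p : MvPolynomial σ ℂ) : eval τ (aeval g p) = eval (fun v => eval τ (g v)) p := by
  have h : (fun i => aeval τ (g i)) = fun v => eval τ (g v) :=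
    funext fun v => aeval_eq_eval'' _ _
  rw [← aeval_eq_eval'' τ, comp_aeval_apply, h, aeval_eq_eval'']

private lemma polyeval_aeval {σ : Type*} (s : ℂ) (g : σ → Polynomial ℂ)
    (p : MvPolynomial σ ℂ) :
    (aeval g p : Polynomial ℂ).eval s = eval (fun v => (g v).eval s) p := by
  have h : (fun i => Polynomial.aeval s (g i)) = fun v => (g v).eval s :=
    funext fun v => congrFun (Polynomial.coe_aeval_eq_eval s) (g v)
  rw [← congrFun (Polynomial.coe_aeval_eq_eval s) (aeval g p), comp_aeval_apply, h,
    aeval_eq_eval'']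

private lemma pderiv_aeval_diag {σ : Type*} [DecidableEq σ] (c : σ → ℂ)
    (v : σ) (P : MvPolynomial σ ℂ) :
    pderiv v (aeval (R := ℂ) (S₁ := MvPolynomial σ ℂ) (fun u => C (c u) * X u) P)
      = C (c v) * aeval (fun u => C (c u) * X u) (pderiv v P) := by
  induction P using MvPolynomial.induction_on with
  | C a => simp
  | add p q hp hq => simp only [map_add, hp, hq, mul_add]
  | mul_X p u hp =>
      rcases eq_or_ne v u with rfl | hne
      · simp only [map_mul, map_add, aeval_X, pderiv_mul, hp, pderiv_C_mul, pderiv_C,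
          pderiv_X_self, zero_mul, zero_add, mul_one, map_one]
        ring
      · simp only [map_mul, map_add, aeval_X, pderiv_mul, hp, pderiv_C_mul, pderiv_C,
          zero_mul, zero_add, pderiv_X_of_ne (Ne.symm hne), mul_zero, map_zero, add_zero]
        ring

/-- The diagonal coefficients of the torus rescaling substitution. -/
private def twc (w : Fin 4 → ℕ) (d : Fin 4 → ℤ) (l m : ℂˣ) : BVar 4 → ℂ :=
  Sum.elim (fun _ => (l:ℂ)) (fun i => (m:ℂ)^(w i) * (l:ℂ)^(-(d i)))

private lemma twist_eq (w : Fin 4 → ℕ) (d : Fin 4 → ℤ) (l m : ℂˣ) :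
    twist w d l m = aeval (fun u => C (twc w d l m u) * X u) := by
  unfold twist
  exact congrArg _ (funext fun u => by cases u <;> rfl)

/-- Twist-homogeneity under the subtorus `m = 1`. -/
private def TH (d : Fin 4 → ℤ) (e : ℤ) (R : BPoly 4) : Prop :=
  ∀ l : ℂˣ, twist (fun _ => 1) d l 1 R = C ((l:ℂ)^e) * R

private lemma TH_of_isBihom {d : Fin 4 → ℤ} {n : ℤ} {P : BPoly 4}
    (h : IsBihom (fun _ => 1) d 3 n P) : TH d n P := by
  intro l
  have h1 := h l 1
  simpa using h1

private lemma TH_pderiv (d : Fin 4 → ℤ) (e : ℤ) (R : BPoly 4) (h : TH d e R)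
    (v : BVar 4) : TH d (e + Sum.elim (fun _ => -1) d v) (pderiv v R) := by
  intro l
  have hl0 : (l : ℂ) ≠ 0 := Units.ne_zero l
  have h1 := congrArg (pderiv v) (h l)
  rw [twist_eq, pderiv_aeval_diag, ← twist_eq, pderiv_C_mul] at h1
  have hcne : twc (fun _ => 1) d l 1 v ≠ 0 := by
    cases v with
    | inl i => exact hl0
    | inr i =>
        simp only [twc, Sum.elim_inr, Units.val_one, one_pow, one_mul]
        exact zpow_ne_zero _ hl0
  have h2 := congrArg (fun q => C (twc (fun _ => 1) d l 1 v)⁻¹ * q) h1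
  simp only [← mul_assoc, ← map_mul, inv_mul_cancel₀ hcne, map_one, one_mul] at h2
  rw [h2]
  congr 2
  cases v with
  | inl i =>
      show ((l:ℂ))⁻¹ * (l:ℂ)^e = (l:ℂ)^(e + (-1 : ℤ))
      rw [zpow_add₀ hl0, zpow_neg, zpow_one, mul_comm]
  | inr i =>
      show ((1:ℂ)^(1:ℕ) * (l:ℂ)^(-(d i)))⁻¹ * (l:ℂ)^e = (l:ℂ)^(e + d i)
      rw [one_pow, one_mul, ← zpow_neg, neg_neg, zpow_add₀ hl0, mul_comm]

/-- The base point of the section `x₀ = x₁ = x₂ = 0` in fibre coordinates. -/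
private def x3v : Fin 4 → ℂ := fun i => if i = 3 then 1 else 0

private lemma TH_key (d : Fin 4 → ℤ) (hd3 : d 3 = 0) (e : ℤ) (R : BPoly 4) (h : TH d e R)
    (l : ℂˣ) (t : Fin 2 → ℂ) :
    eval (Sum.elim (fun i => (l:ℂ) * t i) x3v) R = (l:ℂ)^e * eval (Sum.elim t x3v) R := by
  have h1 := congrArg (eval (Sum.elim t x3v)) (h l)
  rw [twist_eq, eval_aeval', eval_mul, eval_C] at h1
  have harg : (fun v => eval (Sum.elim t x3v) (C (twc (fun _ => 1) d l 1 v) * X v))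
      = Sum.elim (fun i => (l:ℂ) * t i) x3v := by
    funext v
    cases v with
    | inl i => simp [twc]
    | inr i =>
        rcases eq_or_ne i 3 with rfl | hi
        · simp [twc, x3v, hd3]
        · simp [twc, x3v, hi]
  rw [harg] at h1
  exact h1

private lemma TH_vanish (d : Fin 4 → ℤ) (hd3 : d 3 = 0) (e : ℤ) (he : e < 0)
    (R : BPoly 4) (h : TH d e R) (t : Fin 2 → ℂ) :
    eval (Sum.elim t x3v) R = 0 := by
  set A : Polynomial ℂ := aeval (Sum.elim (fun i => Polynomial.C (t i) * Polynomial.X)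
    (fun i => Polynomial.C (x3v i))) R with hA
  have hAeval : ∀ s : ℂ, A.eval s = eval (Sum.elim (fun i => s * t i) x3v) R := by
    intro s
    rw [hA, polyeval_aeval]
    refine DFunLike.congr (congrArg MvPolynomial.eval (funext fun v => ?_)) rfl
    cases v with
    | inl i => simp only [Sum.elim_inl, Polynomial.eval_mul, Polynomial.eval_C,
        Polynomial.eval_X]; ring
    | inr i => simp only [Sum.elim_inr, Polynomial.eval_C]
  set k := (-e).toNat with hk
  have hk1 : 1 ≤ k := by omega
  have hone : eval (Sum.elim t x3v) R = A.eval 1 := by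
    rw [hAeval 1]
    refine DFunLike.congr (congrArg MvPolynomial.eval (funext fun v => ?_)) rfl
    cases v <;> simp
  rw [hone]
  refine c_eq_zero_of_neg A k hk1 (A.eval 1) ?_
  intro l hl
  have hkey := TH_key d hd3 e R h (Units.mk0 l hl) t
  rw [Units.val_mk0, ← hAeval l] at hkey
  rw [hkey, ← hone]
  have hle : l^e = (l ^ k)⁻¹ := by
    rw [show e = -(k:ℤ) by omega, zpow_neg, zpow_natCast]
  rw [hle, ← mul_assoc, mul_inv_cancel₀ (pow_ne_zero _ hl), one_mul, hone]

private lemma not_smooth_of_bad (d : Fin 4 → ℤ) (n : ℤ) (hd3 : d 3 = 0)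
    (h0 : d 0 ≠ -n) (h1 : n + d 1 < 0) (h2 : n + d 2 < 0) (hn : n < 0)
    (P : BPoly 4) (hP : IsBihom (fun _ => 1) d 3 n P) : ¬ IsSmoothHyp P := by
  intro hs
  have hTH : TH d n P := TH_of_isBihom hP
  have hD0 : TH d (n + d 0) (pderiv (Sum.inr 0) P) := TH_pderiv d n P hTH (Sum.inr 0)
  obtain ⟨t, ht, hgt⟩ : ∃ t : Fin 2 → ℂ, t ≠ 0 ∧
      eval (Sum.elim t x3v) (pderiv (Sum.inr 0) P) = 0 := by
    rcases lt_or_gt_of_ne (show n + d 0 ≠ 0 by omega) with he | he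
    · exact ⟨fun _ => 1, by intro hz; have := congrFun hz 0; simp at this,
        TH_vanish d hd3 _ he _ hD0 _⟩
    · -- positive degree: the coefficient of `x₀x₃²` has a zero on `ℙ¹`
      set D := pderiv (Sum.inr (0 : Fin 4)) P with hD
      set k := (n + d 0).toNat with hk0
      have hk1 : 1 ≤ k := by omega
      set pp : Polynomial ℂ := aeval (Sum.elim
          (fun i : Fin 2 => if i = 0 then Polynomial.X else 1)
          (fun i => Polynomial.C (x3v i))) D with hpp
      have hppe : ∀ s : ℂ,
          pp.eval s = eval (Sum.elim (fun i : Fin 2 => if i = 0 then s else 1) x3v) D := by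
        intro s
        rw [hpp, polyeval_aeval]
        refine DFunLike.congr (congrArg MvPolynomial.eval (funext fun v => ?_)) rfl
        cases v with
        | inl i => by_cases hi0 : i = 0 <;> simp [hi0]
        | inr i => simp
      by_cases hroot : ∃ s : ℂ, pp.eval s = 0
      · obtain ⟨s, hs0⟩ := hroot
        refine ⟨fun i => if i = 0 then s else 1, ?_, ?_⟩
        · intro hz; have := congrFun hz 1; simp at this
        · rw [← hppe s]; exact hs0
      · push_neg at hroot
        have hppne : pp ≠ 0 := fun hz => hroot 0 (by rw [hz]; simp)
        have hdeg : pp.natDegree = 0 := by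
          by_contra hdeg
          obtain ⟨s, hsr⟩ := Complex.exists_root (f := pp)
            (Polynomial.natDegree_pos_iff_degree_pos.mp (by omega))
          exact hroot s hsr
        have hc := Polynomial.eq_C_of_natDegree_eq_zero hdeg
        set c := pp.coeff 0 with hcdef
        have hcv : ∀ s : ℂ, pp.eval s = c := by intro s; rw [hc]; simp
        set u : Polynomial ℂ := aeval (Sum.elim
            (fun i : Fin 2 => if i = 0 then 1 else Polynomial.X)
            (fun i => Polynomial.C (x3v i))) D with hu
        have hue : ∀ s : ℂ,
            u.eval s = eval (Sum.elim (fun i : Fin 2 => if i = 0 then 1 else s) x3v) D := by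
          intro s
          rw [hu, polyeval_aeval]
          refine DFunLike.congr (congrArg MvPolynomial.eval (funext fun v => ?_)) rfl
          cases v with
          | inl i => by_cases hi0 : i = 0 <;> simp [hi0]
          | inr i => simp
        have hcl : ∀ l : ℂ, l ≠ 0 → u.eval l = c * l ^ k := by
          intro l hl
          have hkey := TH_key d hd3 (n + d 0) D hD0 (Units.mk0 l hl)
            (fun i => if i = 0 then l⁻¹ else 1)
          rw [Units.val_mk0] at hkey
          have harg : (Sum.elim (fun i : Fin 2 => l * (if i = 0 then l⁻¹ else 1)) x3v)
              = Sum.elim (fun i : Fin 2 => if i = 0 then (1:ℂ) else l) x3v := by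
            funext v
            cases v with
            | inl i =>
                by_cases hi0 : i = 0 <;> simp [hi0, mul_inv_cancel₀ hl]
            | inr i => rfl
          rw [harg] at hkey
          rw [hue l, hkey, ← hppe l⁻¹, hcv]
          rw [show (n + d 0 : ℤ) = (k:ℤ) by omega, zpow_natCast]
          ring
        have h0u := eval_zero_of_pos u k hk1 c hcl
        refine ⟨fun i => if i = 0 then 1 else 0, ?_, ?_⟩
        · intro hz; have := congrFun hz 0; simp at this
        · rw [← hue 0]; exact h0u
  have hmem : ((t, x3v) : (Fin 2 → ℂ) × (Fin 4 → ℂ)) ∈ ConeSet 4 :=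
    ⟨ht, by intro hz; have := congrFun hz 3; simp [x3v] at this⟩
  have hzero : evalPt P (t, x3v) = 0 := TH_vanish d hd3 n hn P hTH t
  obtain ⟨v, hv⟩ := hs (t, x3v) hmem hzero
  apply hv
  cases v with
  | inl i =>
      exact TH_vanish d hd3 (n + (-1)) (by omega) _ (TH_pderiv d n P hTH (Sum.inl i)) t
  | inr i =>
      fin_cases i
      · exact hgt
      · exact TH_vanish d hd3 (n + d 1) h1 _ (TH_pderiv d n P hTH (Sum.inr 1)) t
      · exact TH_vanish d hd3 (n + d 2) h2 _ (TH_pderiv d n P hTH (Sum.inr 2)) t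
      · exact TH_vanish d hd3 (n + d 3) (by omega) _ (TH_pderiv d n P hTH (Sum.inr 3)) t


/-- If a general divisor `X ∈ |3M + nL|` on the scroll
`Proj(⊕ O(dᵢ))`, `d₁ ≥ d₂ ≥ d₃ ≥ d₄ = 0`, is smooth with `rk Pic X = 2`,
then either `d₁ = -n` or `d₂ ≥ -n`. -/
theorem smooth_picrank_two_implies_d1_or_d2
    (d : Fin 4 → ℤ) (n : ℤ)
    (hd : ∀ i j : Fin 4, i ≤ j → d j ≤ d i) (hd4 : d 3 = 0)
    (hX : GenerallyHolds (bihomSubmodule (fun _ => 1) d 3 n)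
      (fun P => IsSmoothHyp P ∧ ChartClassGroupTrivial 3 {P})) :
    d 0 = -n ∨ -n ≤ d 1 := by
  by_contra hcon
  push_neg at hcon
  obtain ⟨h0, h1⟩ := hcon
  have h31 : d 3 ≤ d 1 := hd 1 3 (by decide)
  have h21 : d 2 ≤ d 1 := hd 1 2 (by decide)
  have hn : n < 0 := by omega
  obtain ⟨f, hfp, hf0, hgen⟩ := hX
  obtain ⟨P, hPne⟩ := Function.ne_iff.mp hf0
  have hPmem : IsBihom (fun _ => 1) d 3 n (P : BPoly 4) := P.2
  have hΦ := hgen P hPne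
  exact not_smooth_of_bad d n hd4 h0 (by omega) (by omega) hn P hPmem hΦ.1


end ScrollAG
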